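/- Let \widehat{\mathbf{X}} = \mathbf{Z}\Omega \in \mathbb{R}^{(p+1)\times(n+1)} with \mathbf{Z} = (Z_{(i-2)n+t})_{i=1..p+1, t=1..n} and \Omega as in the definition of the simplified model, and set \Sigma_{\widehat{\mathbf{X}}} := p^{-2}\mathrm{tr}(\widehat{\mathbf{X}}\widehat{\mathbf{X}}^T). Under condition (Z1) on (Z_t) and |c_j| \le C(j+1)^{-1-\delta} (C, \delta > 0), in the regime p/n \to y \in (0,\infty): E\,\Sigma_{\widehat{\mathbf{X}}} is bounded uniformly in n, and \mathrm{Var}\,\Sigma_{\widehat{\mathbf{X}}} = O(n^{-2}). -/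

import Mathlib

/-!
Write `𝐗̂ = 𝐙Ω` and `A = ΩΩᵀ`. Then `tr(𝐗̂𝐗̂ᵀ) = ∑ᵢ zᵢᵀ A zᵢ` is the quadratic form `ξᵀ (1 ⊗ A) ξ`
in the entries `ξ` of `𝐙`, which are distinct members of the independent standardized family `Z`.
For such a form `ξᵀBξ`, the fourth-moment formula
`E[ξ_a ξ_b ξ_u ξ_v] = [a=b][u=v] + [a=u][b=v] + [a=v][b=u] + [a=b=u=v](Eξ_a⁴ - 3)` gives
`E = tr B` and `Var ≤ (σ₄ + 2) ∑ B_{xy}²`.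
Each row and each column of `Ω` lists pairwise distinct coefficients `c_j`, so their `ℓ¹` norms are
at most `R = ∑ |c_j|`, finite by the decay assumption; hence `|A_{ts}| ≤ R²`,
`∑_s |A_{ts}| ≤ R²`, `tr A ≤ nR²` and `∑ A_{ts}² ≤ nR⁴`. Dividing by `p²` (resp. `p⁴`) and
using `n/p → 1/y` gives `E Σ = O(1)` and `Var Σ = O(n⁻²)`.
-/

open MeasureTheory ProbabilityTheory Matrix Filter Topology ENNReal

/-- The `m × m` shift matrix `K_m`, with ones on the subdiagonal. -/
def Kmat (m : ℕ) : Matrix (Fin m) (Fin m) ℝ :=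
  Matrix.of fun i j => if (i : ℕ) = (j : ℕ) + 1 then 1 else 0

/-- `χ_m(K_mᵀ) = ∑_{j=0}^m c_j (K_mᵀ)^j`. -/
noncomputable def chiK (c : ℕ → ℝ) (m : ℕ) : Matrix (Fin m) (Fin m) ℝ :=
  ∑ j ∈ Finset.range (m + 1), c j • ((Kmat m)ᵀ) ^ j

/-- `χ̄_m(K_m) = ∑_{j=0}^m c_{m-j} (K_m)^j`. -/
noncomputable def chibarK (c : ℕ → ℝ) (m : ℕ) : Matrix (Fin m) (Fin m) ℝ :=
  ∑ j ∈ Finset.range (m + 1), c (m - j) • (Kmat m) ^ j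

/-- `Ω = [0 1_n 1_n 0] ⬝ [χ_{n+1}(K_{n+1}ᵀ) ; χ̄_{n+1}(K_{n+1})] ∈ ℝ^{n × (n+1)}`. -/
noncomputable def OmegaMat (c : ℕ → ℝ) (n : ℕ) : Matrix (Fin n) (Fin (n + 1)) ℝ :=
  (Matrix.fromCols
      (Matrix.of fun (i : Fin n) (j : Fin (n + 1)) => if (j : ℕ) = (i : ℕ) + 1 then (1:ℝ) else 0)
      (Matrix.of fun (i : Fin n) (j : Fin (n + 1)) => if (j : ℕ) = (i : ℕ) then (1:ℝ) else 0))
    * (Matrix.fromRows (chiK c (n + 1)) (chibarK c (n + 1)))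

open scoped Kronecker

lemma abs_mul_mul_mul_le (x y z w : ℝ) : |x * y * z * w| ≤ x ^ 4 + y ^ 4 + z ^ 4 + w ^ 4 := by
  rw [abs_le]
  constructor <;> nlinarith [sq_nonneg (x * y - z * w), sq_nonneg (x * y + z * w),
    sq_nonneg (x ^ 2 - y ^ 2), sq_nonneg (z ^ 2 - w ^ 2)]

lemma sum_mul_mul_pairings_eq {ι : Type*} [Fintype ι] [DecidableEq ι] (B : Matrix ι ι ℝ)
    (m : ι → ℝ) :
    ∑ x, ∑ y, ∑ u, ∑ v, B x y * B u v *
      ((if x = y ∧ u = v then 1 else 0) + (if x = u ∧ y = v then 1 else 0)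
        + (if x = v ∧ y = u then 1 else 0)
        + (if x = y ∧ x = u ∧ x = v then m x - 3 else 0)) =
    trace B ^ 2 + ∑ x, ∑ y, B x y ^ 2 + ∑ x, ∑ y, B x y * B y x
      + ∑ x, B x x ^ 2 * (m x - 3) := by
  simp only [mul_add, Finset.sum_add_distrib, ite_and, mul_ite, mul_zero, mul_one]
  simp [Finset.sum_ite_eq, trace, sq, Finset.sum_mul_sum]

lemma sum_mul_swap_le_sum_sq {ι : Type*} [Fintype ι] (B : Matrix ι ι ℝ) :
    ∑ x, ∑ y, B x y * B y x ≤ ∑ x, ∑ y, B x y ^ 2 := by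
  have hswap : ∑ x, ∑ y, B y x ^ 2 = ∑ x, ∑ y, B x y ^ 2 := Finset.sum_comm
  have hamgm : ∀ x y, B x y * B y x ≤ (B x y ^ 2 + B y x ^ 2) / 2 := fun x y => by
    nlinarith [sq_nonneg (B x y - B y x)]
  calc ∑ x, ∑ y, B x y * B y x ≤ ∑ x, ∑ y, (B x y ^ 2 + B y x ^ 2) / 2 :=
        Finset.sum_le_sum fun x _ => Finset.sum_le_sum fun y _ => hamgm x y
    _ = ∑ x, ∑ y, B x y ^ 2 := by
        simp only [add_div, Finset.sum_add_distrib, ← Finset.sum_div, hswap]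
        ring

lemma sum_range_ite_eq_add {M : Type*} [AddCommMonoid M] (f : ℕ → M) {m a b : ℕ} (ha : a ≤ m) :
    ∑ j ∈ Finset.range (m + 1), (if a = b + j then f j else 0) =
      if b ≤ a then f (a - b) else 0 := by
  split_ifs with hba
  · rw [Finset.sum_eq_single_of_mem (a - b) (Finset.mem_range.2 (by omega))]
    · rw [if_pos (by omega)]
    · intro j _ hj
      rw [if_neg (by omega)]
  · exact Finset.sum_eq_zero fun j _ => if_neg (by omega)

namespace ProbabilityTheory

variable {Ω ι : Type*} {mΩ : MeasurableSpace Ω} {μ : Measure Ω} {X : ι → Ω → ℝ}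
  (hX : ∀ i, Measurable (X i)) (hX4 : ∀ i, Integrable (fun ω => X i ω ^ 4) μ)
  (hindep : iIndepFun X μ) (hmean : ∀ i, ∫ ω, X i ω ∂μ = 0)
  (hvar : ∀ i, ∫ ω, X i ω ^ 2 ∂μ = 1)

include hX hX4 in
lemma integrable_mul_mul_mul (a b u v : ι) :
    Integrable (fun ω => X a ω * X b ω * X u ω * X v ω) μ :=
  Integrable.mono' ((((hX4 a).add (hX4 b)).add (hX4 u)).add (hX4 v))
    ((((hX a).mul (hX b)).mul (hX u)).mul (hX v)).aestronglyMeasurable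
    (Eventually.of_forall fun _ => abs_mul_mul_mul_le _ _ _ _)

include hX hX4 in
lemma memLp_two_mul (a b : ι) : MemLp (fun ω => X a ω * X b ω) 2 μ := by
  refine (memLp_two_iff_integrable_sq ((hX a).mul (hX b)).aestronglyMeasurable).2 ?_
  refine (integrable_mul_mul_mul hX hX4 a a b b).congr (Eventually.of_forall fun ω => ?_)
  simp only [Pi.mul_apply]
  ring

include hX hindep hmean hvar in
lemma integral_mul_eq_ite [DecidableEq ι] (a b : ι) :
    ∫ ω, X a ω * X b ω ∂μ = if a = b then 1 else 0 := by
  split_ifs with h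
  · subst h; simpa only [sq] using hvar a
  · rw [(hindep.indepFun h).integral_fun_mul_eq_mul_integral (hX a).aestronglyMeasurable
      (hX b).aestronglyMeasurable, hmean a, zero_mul]

include hX hindep hvar in
lemma integral_sq_mul_sq {a b : ι} (hab : a ≠ b) : ∫ ω, X a ω ^ 2 * X b ω ^ 2 ∂μ = 1 := by
  have hind : IndepFun (fun ω => X a ω ^ 2) (fun ω => X b ω ^ 2) μ :=
    (hindep.indepFun hab).comp (measurable_id.pow_const 2) (measurable_id.pow_const 2)
  rw [hind.integral_fun_mul_eq_mul_integral ((hX a).pow_const 2).aestronglyMeasurable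
    ((hX b).pow_const 2).aestronglyMeasurable, hvar, hvar, one_mul]

include hX hindep hmean in
lemma integral_mul_mul_mul_eq_zero {a b u v : ι} (hab : a ≠ b) (hau : a ≠ u) (hav : a ≠ v) :
    ∫ ω, X a ω * X b ω * X u ω * X v ω ∂μ = 0 := by
  classical
  have hdisj : Disjoint ({a} : Finset ι) {b, u, v} := by simp [hab, hau, hav]
  have hind : IndepFun (X a) (fun ω => X b ω * X u ω * X v ω) μ :=
    (hindep.indepFun_finset _ _ hdisj hX).comp
      (φ := fun f : ({a} : Finset ι) → ℝ => f ⟨a, by simp⟩)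
      (ψ := fun f : ({b, u, v} : Finset ι) → ℝ =>
        f ⟨b, by simp⟩ * f ⟨u, by simp⟩ * f ⟨v, by simp⟩)
      (measurable_pi_apply _) (by fun_prop)
  calc ∫ ω, X a ω * X b ω * X u ω * X v ω ∂μ
      = ∫ ω, X a ω * (X b ω * X u ω * X v ω) ∂μ := by simp only [mul_assoc]
    _ = 0 := by
      rw [hind.integral_fun_mul_eq_mul_integral (hX a).aestronglyMeasurable
        (((hX b).mul (hX u)).mul (hX v)).aestronglyMeasurable, hmean, zero_mul]

include hX hindep hmean hvar in
lemma integral_mul_self_mul_mul [DecidableEq ι] (a u v : ι) :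
    ∫ ω, X a ω * X a ω * X u ω * X v ω ∂μ =
      if u = v then (if a = u then ∫ ω, X a ω ^ 4 ∂μ else 1) else 0 := by
  by_cases huv : u = v
  · subst huv
    by_cases hau : a = u
    · subst hau
      simp only [if_true]
      congr 1 with ω
      ring
    · rw [if_pos rfl, if_neg hau, ← integral_sq_mul_sq hX hindep hvar hau]
      congr 1 with ω
      ring
  · rw [if_neg huv]
    by_cases hau : a = u
    · subst hau
      rw [← integral_mul_mul_mul_eq_zero hX hindep hmean (Ne.symm huv) (Ne.symm huv)
        (Ne.symm huv)]
      congr 1 with ω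
      ring
    · rw [← integral_mul_mul_mul_eq_zero hX hindep hmean (Ne.symm hau) (Ne.symm hau) huv]
      congr 1 with ω
      ring

include hX hindep hmean hvar in
lemma integral_mul_mul_mul [DecidableEq ι] (a b u v : ι) :
    ∫ ω, X a ω * X b ω * X u ω * X v ω ∂μ =
      (if a = b ∧ u = v then 1 else 0) + (if a = u ∧ b = v then 1 else 0)
        + (if a = v ∧ b = u then 1 else 0)
        + (if a = b ∧ a = u ∧ a = v then ∫ ω, X a ω ^ 4 ∂μ - 3 else 0) := by
  by_cases hab : a = b
  · subst hab
    rw [integral_mul_self_mul_mul hX hindep hmean hvar]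
    by_cases huv : u = v
    · subst huv
      by_cases hau : a = u
      · subst hau; simp only [and_self, if_true]; ring
      · simp [hau]
    · by_cases hau : a = u
      · subst hau; simp [huv]
      · simp [huv, hau]
  · by_cases hau : a = u
    · subst hau
      rw [show (fun ω => X a ω * X b ω * X a ω * X v ω) =
          fun ω => X a ω * X a ω * X b ω * X v ω from funext fun ω => by ring,
        integral_mul_self_mul_mul hX hindep hmean hvar]
      rcases eq_or_ne b v with rfl | hbv
      · simp [hab, Ne.symm hab]
      · simp [hab, hbv, Ne.symm hab]
    · by_cases hav : a = v
      · subst hav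
        rw [show (fun ω => X a ω * X b ω * X u ω * X a ω) =
            fun ω => X a ω * X a ω * X b ω * X u ω from funext fun ω => by ring,
          integral_mul_self_mul_mul hX hindep hmean hvar]
        rcases eq_or_ne b u with rfl | hbu
        · simp [hab, Ne.symm hab]
        · simp [hab, hbu, hau]
      · simp [hab, hau, hav, integral_mul_mul_mul_eq_zero hX hindep hmean hab hau hav]

variable [Fintype ι] (B : Matrix ι ι ℝ)

include hX hX4 in
lemma memLp_two_quadForm : MemLp (fun ω => ∑ x, ∑ y, B x y * (X x ω * X y ω)) 2 μ :=
  memLp_finsetSum Finset.univ (f := fun x ω => ∑ y, B x y * (X x ω * X y ω)) fun x _ =>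
    memLp_finsetSum Finset.univ fun y _ => (memLp_two_mul hX hX4 x y).const_mul (B x y)

include hX hX4 hindep hmean hvar in
lemma integral_quadForm_sq :
    ∫ ω, (∑ x, ∑ y, B x y * (X x ω * X y ω)) ^ 2 ∂μ =
      trace B ^ 2 + ∑ x, ∑ y, B x y ^ 2 + ∑ x, ∑ y, B x y * B y x
        + ∑ x, B x x ^ 2 * (∫ ω, X x ω ^ 4 ∂μ - 3) := by
  classical
  have hexpand : ∀ ω, (∑ x, ∑ y, B x y * (X x ω * X y ω)) ^ 2 =
      ∑ q : (ι × ι) × (ι × ι), B q.1.1 q.1.2 * B q.2.1 q.2.2 *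
        (X q.1.1 ω * X q.1.2 ω * X q.2.1 ω * X q.2.2 ω) := by
    intro ω
    simp only [sq, Fintype.sum_prod_type, Finset.sum_mul, Finset.mul_sum]
    exact Fintype.sum_congr _ _ fun x => Fintype.sum_congr _ _ fun y =>
      Fintype.sum_congr _ _ fun u => Fintype.sum_congr _ _ fun v => by ring
  simp_rw [hexpand]
  rw [integral_finsetSum _ fun q _ => (integrable_mul_mul_mul hX hX4 _ _ _ _).const_mul _]
  simp only [integral_const_mul, integral_mul_mul_mul hX hindep hmean hvar, Fintype.sum_prod_type]
  exact sum_mul_mul_pairings_eq B _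

variable [IsProbabilityMeasure μ]

include hX hX4 hindep hmean hvar in
lemma integral_quadForm : ∫ ω, ∑ x, ∑ y, B x y * (X x ω * X y ω) ∂μ = trace B := by
  classical
  have hint : ∀ x y, Integrable (fun ω => B x y * (X x ω * X y ω)) μ := fun x y =>
    ((memLp_two_mul hX hX4 x y).integrable one_le_two).const_mul _
  rw [integral_finsetSum Finset.univ (f := fun x ω => ∑ y, B x y * (X x ω * X y ω))
    fun x _ => integrable_finsetSum _ fun y _ => hint x y]
  simp_rw [integral_finsetSum Finset.univ (f := fun y ω => B _ y * (X _ ω * X y ω))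
    fun y _ => hint _ y]
  simp [integral_const_mul, integral_mul_eq_ite hX hindep hmean hvar, trace]

include hX hX4 hindep hmean hvar in
lemma variance_quadForm_le {σ4 : ℝ} (hσ4 : ∀ i, ∫ ω, X i ω ^ 4 ∂μ ≤ σ4) :
    variance (fun ω => ∑ x, ∑ y, B x y * (X x ω * X y ω)) μ
      ≤ (σ4 + 2) * ∑ x, ∑ y, B x y ^ 2 := by
  rw [variance_eq_sub (memLp_two_quadForm hX hX4 B)]
  simp only [Pi.pow_apply]
  rw [integral_quadForm_sq hX hX4 hindep hmean hvar B,
    integral_quadForm hX hX4 hindep hmean hvar B]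
  have hdiag : ∀ x, B x x ^ 2 * (∫ ω, X x ω ^ 4 ∂μ - 3) ≤ σ4 * ∑ y, B x y ^ 2 := fun x => by
    have hm4 : 0 ≤ ∫ ω, X x ω ^ 4 ∂μ := integral_nonneg fun ω => by positivity
    have hrow : B x x ^ 2 ≤ ∑ y, B x y ^ 2 :=
      Finset.single_le_sum (f := fun y => B x y ^ 2) (fun y _ => sq_nonneg _) (Finset.mem_univ x)
    nlinarith [hσ4 x, sq_nonneg (B x x)]
  have hdiag_sum := Finset.sum_le_sum fun x (_ : x ∈ Finset.univ) => hdiag x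
  rw [← Finset.mul_sum] at hdiag_sum
  linarith [sum_mul_swap_le_sum_sq B]

end ProbabilityTheory

lemma sum_abs_mul_le_sq {k : Type*} [Fintype k] {R : ℝ} {v g : k → ℝ} (hv : ∑ j, |v j| ≤ R)
    (hg : ∀ j, g j ≤ R) : ∑ j, |v j| * g j ≤ R ^ 2 := by
  have hR : 0 ≤ R := (Finset.sum_nonneg fun j _ => abs_nonneg (v j)).trans hv
  calc ∑ j, |v j| * g j ≤ ∑ j, |v j| * R :=
        Finset.sum_le_sum fun j _ => mul_le_mul_of_nonneg_left (hg j) (abs_nonneg _)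
    _ ≤ R * R := by rw [← Finset.sum_mul]; exact mul_le_mul_of_nonneg_right hv hR
    _ = R ^ 2 := (sq R).symm

namespace Matrix

variable {m n k : Type*} [Fintype k]

lemma trace_mul_mul_transpose_eq_sum [Fintype m] [Fintype n] [DecidableEq m]
    (M : Matrix m n ℝ) (O : Matrix n k ℝ) :
    trace ((M * O) * (M * O)ᵀ) =
      ∑ x : m × n, ∑ y : m × n, ((1 : Matrix m m ℝ) ⊗ₖ (O * Oᵀ)) x y * (M x.1 x.2 * M y.1 y.2) := by
  have h : (M * O) * (M * O)ᵀ = M * (O * Oᵀ) * Mᵀ := by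
    simp only [transpose_mul, Matrix.mul_assoc]
  rw [h]
  simp only [trace, diag, mul_apply, transpose_apply, Fintype.sum_prod_type, kroneckerMap_apply,
    one_apply, ite_mul, one_mul, zero_mul, Finset.sum_ite_irrel, Finset.sum_const_zero,
    Finset.sum_ite_eq, Finset.mem_univ, if_true]
  refine Fintype.sum_congr _ _ fun i => ?_
  rw [Finset.sum_comm]
  refine Fintype.sum_congr _ _ fun s => ?_
  rw [Finset.sum_mul]
  exact Fintype.sum_congr _ _ fun t => by ring

lemma trace_one_kronecker [Fintype m] [Fintype n] [DecidableEq m] (A : Matrix n n ℝ) :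
    trace ((1 : Matrix m m ℝ) ⊗ₖ A) = Fintype.card m * trace A := by
  rw [trace_kronecker, trace_one]

lemma sum_sq_one_kronecker [Fintype m] [Fintype n] [DecidableEq m] (A : Matrix n n ℝ) :
    ∑ x : m × n, ∑ y : m × n, ((1 : Matrix m m ℝ) ⊗ₖ A) x y ^ 2 =
      Fintype.card m * ∑ t, ∑ s, A t s ^ 2 := by
  simp [Fintype.sum_prod_type, kroneckerMap_apply, one_apply, ite_pow]

lemma trace_mul_transpose_nonneg [Fintype n] (O : Matrix n k ℝ) : 0 ≤ trace (O * Oᵀ) :=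
  Finset.sum_nonneg fun t _ => Finset.sum_nonneg fun j _ => mul_self_nonneg (O t j)

variable {R : ℝ} (O : Matrix n k ℝ) (hrow : ∀ i, ∑ j, |O i j| ≤ R)
include hrow

lemma abs_mul_transpose_apply_le (t s : n) : |(O * Oᵀ) t s| ≤ R ^ 2 := by
  have hentry : ∀ j, |O s j| ≤ R := fun j =>
    (Finset.single_le_sum (fun j _ => abs_nonneg (O s j)) (Finset.mem_univ j)).trans (hrow s)
  calc |(O * Oᵀ) t s| ≤ ∑ j, |O t j| * |O s j| := by
        simpa only [mul_apply, transpose_apply, abs_mul] using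
          Finset.abs_sum_le_sum_abs (fun j => O t j * O s j) Finset.univ
    _ ≤ R ^ 2 := sum_abs_mul_le_sq (hrow t) hentry

lemma trace_mul_transpose_le [Fintype n] : trace (O * Oᵀ) ≤ Fintype.card n * R ^ 2 :=
  calc trace (O * Oᵀ) ≤ ∑ _t : n, R ^ 2 :=
        Finset.sum_le_sum fun t _ => (le_abs_self _).trans (abs_mul_transpose_apply_le O hrow t t)
    _ = Fintype.card n * R ^ 2 := by simp

variable [Fintype n] (hcol : ∀ j, ∑ i, |O i j| ≤ R)
include hcol

lemma sum_abs_mul_transpose_apply_le (t : n) : ∑ s, |(O * Oᵀ) t s| ≤ R ^ 2 :=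
  calc ∑ s, |(O * Oᵀ) t s| ≤ ∑ s, ∑ j, |O t j| * |O s j| := by
        refine Finset.sum_le_sum fun s _ => ?_
        simpa only [mul_apply, transpose_apply, abs_mul] using
          Finset.abs_sum_le_sum_abs (fun j => O t j * O s j) Finset.univ
    _ = ∑ j, |O t j| * ∑ s, |O s j| := by rw [Finset.sum_comm]; simp only [Finset.mul_sum]
    _ ≤ R ^ 2 := sum_abs_mul_le_sq (hrow t) hcol

lemma sum_sq_mul_transpose_le : ∑ t, ∑ s, (O * Oᵀ) t s ^ 2 ≤ Fintype.card n * R ^ 4 :=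
  calc ∑ t, ∑ s, (O * Oᵀ) t s ^ 2 ≤ ∑ _t : n, R ^ 4 := by
        refine Finset.sum_le_sum fun t _ => ?_
        calc ∑ s, (O * Oᵀ) t s ^ 2 ≤ ∑ s, |(O * Oᵀ) t s| * R ^ 2 := by
              refine Finset.sum_le_sum fun s _ => ?_
              rw [← sq_abs, sq]
              exact mul_le_mul_of_nonneg_left (abs_mul_transpose_apply_le O hrow t s)
                (abs_nonneg _)
          _ ≤ R ^ 2 * R ^ 2 := by
              rw [← Finset.sum_mul]
              exact mul_le_mul_of_nonneg_right (sum_abs_mul_transpose_apply_le O hrow hcol t)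
                (sq_nonneg R)
          _ = R ^ 4 := by ring
    _ = Fintype.card n * R ^ 4 := by simp

end Matrix

section RandomMatrix

variable {Ω κ m n k : Type*} [Fintype m] [Fintype n] [Fintype k] {mΩ : MeasurableSpace Ω}
  {μ : Measure Ω} [IsProbabilityMeasure μ] {X : κ → Ω → ℝ} (hX : ∀ i, Measurable (X i))
  (hX4 : ∀ i, Integrable (fun ω => X i ω ^ 4) μ) (hindep : iIndepFun X μ)
  (hmean : ∀ i, ∫ ω, X i ω ∂μ = 0) (hvar : ∀ i, ∫ ω, X i ω ^ 2 ∂μ = 1)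
  {e : m × n → κ} (he : Function.Injective e)
  {M : Ω → Matrix m n ℝ} (hM : ∀ ω i t, M ω i t = X (e (i, t)) ω) (O : Matrix n k ℝ)

include hX hX4 hindep hmean hvar he hM in
lemma integral_trace_mul_mul_transpose :
    ∫ ω, trace ((M ω * O) * (M ω * O)ᵀ) ∂μ = Fintype.card m * trace (O * Oᵀ) := by
  classical
  simp_rw [trace_mul_mul_transpose_eq_sum, hM]
  rw [integral_quadForm (fun x => hX (e x)) (fun x => hX4 (e x)) (hindep.precomp he)
    (fun x => hmean (e x)) (fun x => hvar (e x)), trace_one_kronecker]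

include hX hX4 hindep hmean hvar he hM in
lemma variance_trace_mul_mul_transpose_le {σ4 : ℝ} (hσ4 : ∀ i, ∫ ω, X i ω ^ 4 ∂μ ≤ σ4) :
    variance (fun ω => trace ((M ω * O) * (M ω * O)ᵀ)) μ
      ≤ (σ4 + 2) * (Fintype.card m * ∑ t, ∑ s, (O * Oᵀ) t s ^ 2) := by
  classical
  simp_rw [trace_mul_mul_transpose_eq_sum, hM]
  rw [← sum_sq_one_kronecker]
  exact variance_quadForm_le (fun x => hX (e x)) (fun x => hX4 (e x)) (hindep.precomp he)
    (fun x => hmean (e x)) (fun x => hvar (e x)) _ fun x => hσ4 (e x)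

end RandomMatrix

lemma succ_div_le_two {P : ℕ} (hP : 0 < P) : ((P : ℝ) + 1) / P ≤ 2 := by
  have hP' : (1 : ℝ) ≤ P := by exact_mod_cast hP
  rw [div_le_iff₀ (by positivity)]
  linarith

lemma inv_sq_mul_succ_mul_le (P n : ℕ) :
    ((P : ℝ) ^ 2)⁻¹ * ((P + 1) * n) ≤ 2 * (n / P) := by
  rcases Nat.eq_zero_or_pos P with rfl | hP
  · simp
  · calc ((P : ℝ) ^ 2)⁻¹ * ((P + 1) * n) = (P + 1) / P * (n / P) := by
          field_simp
      _ ≤ 2 * (n / P) := by gcongr; exact succ_div_le_two hP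

lemma inv_sq_sq_mul_succ_mul_le (P n : ℕ) :
    (((P : ℝ) ^ 2)⁻¹) ^ 2 * ((P + 1) * n) ≤ 2 * (n / P) ^ 3 / n ^ 2 := by
  rcases Nat.eq_zero_or_pos P with rfl | hP
  · simp
  rcases Nat.eq_zero_or_pos n with rfl | hn
  · simp
  have hn' : (n : ℝ) ≠ 0 := by positivity
  calc (((P : ℝ) ^ 2)⁻¹) ^ 2 * ((P + 1) * n) = (P + 1) / P * ((n : ℝ) / P) ^ 3 / n ^ 2 := by
        field_simp
    _ ≤ 2 * ((n : ℝ) / P) ^ 3 / n ^ 2 := by gcongr; exact succ_div_le_two hP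

lemma exists_forall_natCast_div_le {p : ℕ → ℕ} {y : ℝ} (hy : y ≠ 0)
    (hpn : Tendsto (fun n => (p n : ℝ) / n) atTop (𝓝 y)) : ∃ U, ∀ n : ℕ, (n : ℝ) / p n ≤ U := by
  have h : Tendsto (fun n : ℕ => (n : ℝ) / p n) atTop (𝓝 y⁻¹) := by
    simpa only [inv_div] using hpn.inv₀ hy
  obtain ⟨U, hU⟩ := h.bddAbove_range
  exact ⟨U, fun n => hU (Set.mem_range_self n)⟩

lemma sum_abs_comp_le_tsum {κ : Type*} [Fintype κ] {c : ℕ → ℝ} (hc : Summable fun k => |c k|)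
    {f : κ → ℕ} (hf : Function.Injective f) : ∑ x, |c (f x)| ≤ ∑' k, |c k| := by
  rw [← tsum_fintype (L := .unconditional _)]
  exact tsum_comp_le_tsum_of_inj hc (fun k => abs_nonneg _) hf

lemma summable_abs_of_abs_le_rpow {c : ℕ → ℝ} {C δ : ℝ} (hδ : 0 < δ)
    (hc : ∀ j : ℕ, |c j| ≤ C * ((j : ℝ) + 1) ^ (-(1 + δ))) : Summable fun k => |c k| := by
  have hp : Summable fun k : ℕ => ((k : ℝ) + 1) ^ (-(1 + δ)) := by
    simpa using (summable_nat_add_iff 1).2 (Real.summable_nat_rpow.2 (by linarith : -(1 + δ) < -1))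
  exact Summable.of_nonneg_of_le (fun k => abs_nonneg _) hc (hp.mul_left C)

section ScaledTrace

variable {Ω κ k : Type*} [Fintype k] {mΩ : MeasurableSpace Ω}
  {μ : Measure Ω} [IsProbabilityMeasure μ] {X : κ → Ω → ℝ} (hX : ∀ i, Measurable (X i))
  (hX4 : ∀ i, Integrable (fun ω => X i ω ^ 4) μ) (hindep : iIndepFun X μ)
  (hmean : ∀ i, ∫ ω, X i ω ∂μ = 0) (hvar : ∀ i, ∫ ω, X i ω ^ 2 ∂μ = 1)
  {P n : ℕ} {e : Fin (P + 1) × Fin n → κ}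
  (he : Function.Injective e) {M : Ω → Matrix (Fin (P + 1)) (Fin n) ℝ}
  (hM : ∀ ω i t, M ω i t = X (e (i, t)) ω) {O : Matrix (Fin n) k ℝ} {R : ℝ}
  (hrow : ∀ i, ∑ j, |O i j| ≤ R)

include hX hX4 hindep hmean hvar he hM hrow in
lemma abs_integral_inv_sq_mul_trace_le :
    |∫ ω, ((P : ℝ) ^ 2)⁻¹ * trace ((M ω * O) * (M ω * O)ᵀ) ∂μ| ≤ 2 * (n / P) * R ^ 2 := by
  rw [integral_const_mul, integral_trace_mul_mul_transpose hX hX4 hindep hmean hvar he hM,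
    abs_of_nonneg (by have := trace_mul_transpose_nonneg O; positivity)]
  calc ((P : ℝ) ^ 2)⁻¹ * (Fintype.card (Fin (P + 1)) * trace (O * Oᵀ))
      ≤ ((P : ℝ) ^ 2)⁻¹ * ((P + 1) * (n * R ^ 2)) := by
        have := trace_mul_transpose_le O hrow
        simp only [Fintype.card_fin, Nat.cast_add, Nat.cast_one] at this ⊢
        gcongr
    _ = ((P : ℝ) ^ 2)⁻¹ * ((P + 1) * n) * R ^ 2 := by ring
    _ ≤ 2 * (n / P) * R ^ 2 := mul_le_mul_of_nonneg_right (inv_sq_mul_succ_mul_le P n) (sq_nonneg R)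

include hX hX4 hindep hmean hvar he hM hrow in
lemma variance_inv_sq_mul_trace_le (hcol : ∀ j, ∑ i, |O i j| ≤ R) {σ4 : ℝ} (hσ4₀ : 0 ≤ σ4)
    (hσ4 : ∀ i, ∫ ω, X i ω ^ 4 ∂μ ≤ σ4) :
    variance (fun ω => ((P : ℝ) ^ 2)⁻¹ * trace ((M ω * O) * (M ω * O)ᵀ)) μ
      ≤ 2 * ((σ4 + 2) * R ^ 4) * (n / P) ^ 3 / n ^ 2 := by
  have hV := variance_trace_mul_mul_transpose_le hX hX4 hindep hmean hvar he hM O hσ4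
  have hS := sum_sq_mul_transpose_le O hrow hcol
  simp only [Fintype.card_fin, Nat.cast_add, Nat.cast_one] at hV hS
  rw [variance_const_mul]
  calc (((P : ℝ) ^ 2)⁻¹) ^ 2 * variance (fun ω => trace ((M ω * O) * (M ω * O)ᵀ)) μ
      ≤ (((P : ℝ) ^ 2)⁻¹) ^ 2 * ((σ4 + 2) * ((P + 1) * (n * R ^ 4))) := by
        grw [hV, hS]
    _ = (σ4 + 2) * R ^ 4 * ((((P : ℝ) ^ 2)⁻¹) ^ 2 * ((P + 1) * n)) := by ring
    _ ≤ (σ4 + 2) * R ^ 4 * (2 * (n / P) ^ 3 / n ^ 2) := by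
        gcongr; exact inv_sq_sq_mul_succ_mul_le P n
    _ = 2 * ((σ4 + 2) * R ^ 4) * (n / P) ^ 3 / n ^ 2 := by ring

end ScaledTrace

lemma Kmat_pow_apply (m j : ℕ) (i k : Fin m) :
    (Kmat m ^ j) i k = if (i : ℕ) = k + j then 1 else 0 := by
  induction j generalizing i k with
  | zero => simp [one_apply, Fin.ext_iff]
  | succ j ih =>
    rw [pow_succ, mul_apply]
    by_cases hk : (k : ℕ) + 1 < m
    · rw [Finset.sum_eq_single ⟨k + 1, hk⟩]
      · rw [ih]
        simp [Kmat, add_right_comm _ 1 j, add_assoc]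
      · intro l _ hl
        simp [Kmat, Fin.ext_iff] at hl ⊢
        grind
      · simp
    · rw [if_neg (by omega)]
      refine Finset.sum_eq_zero fun l _ => ?_
      simp [Kmat]
      omega

lemma chiK_apply (c : ℕ → ℝ) (m : ℕ) (i k : Fin m) :
    chiK c m i k = if (i : ℕ) ≤ k then c (k - i) else 0 := by
  simp only [chiK, Matrix.sum_apply, Matrix.smul_apply, ← transpose_pow, transpose_apply,
    Kmat_pow_apply, smul_eq_mul, mul_ite, mul_one, mul_zero]
  exact sum_range_ite_eq_add c k.is_lt.le

lemma chibarK_apply (c : ℕ → ℝ) (m : ℕ) (i k : Fin m) :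
    chibarK c m i k = if (k : ℕ) ≤ i then c (m - (i - k)) else 0 := by
  simp only [chibarK, Matrix.sum_apply, Matrix.smul_apply, Kmat_pow_apply, smul_eq_mul, mul_ite,
    mul_one, mul_zero]
  exact sum_range_ite_eq_add (fun j => c (m - j)) i.is_lt.le

def omegaIndex (n : ℕ) (i : Fin n) (j : Fin (n + 1)) : ℕ :=
  if (i : ℕ) < j then j - i - 1 else n + 1 - (i - j)

lemma OmegaMat_apply (c : ℕ → ℝ) (n : ℕ) (i : Fin n) (j : Fin (n + 1)) :
    OmegaMat c n i j = c (omegaIndex n i j) := by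
  have hsucc : ∀ l : Fin (n + 1), (l : ℕ) = i + 1 ↔ l = i.succ := by simp [Fin.ext_iff]
  have hcast : ∀ l : Fin (n + 1), (l : ℕ) = i ↔ l = i.castSucc := by simp [Fin.ext_iff]
  rw [OmegaMat, fromCols_mul_fromRows, Matrix.add_apply, mul_apply, mul_apply]
  simp_rw [of_apply, hsucc, hcast]
  simp only [ite_mul, one_mul, zero_mul, Finset.sum_ite_eq', Finset.mem_univ, if_true, chiK_apply,
    chibarK_apply, Fin.val_succ, Fin.val_castSucc, omegaIndex]
  split_ifs <;> first | omega | simp [Nat.sub_sub]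

lemma omegaIndex_injective_row (n : ℕ) (i : Fin n) : Function.Injective (omegaIndex n i) := by
  intro j j' h
  simp only [omegaIndex] at h
  ext
  split_ifs at h <;> omega

lemma omegaIndex_injective_col (n : ℕ) (j : Fin (n + 1)) :
    Function.Injective fun i => omegaIndex n i j := by
  intro i i' h
  simp only [omegaIndex] at h
  ext
  split_ifs at h <;> omega

lemma sum_abs_OmegaMat_row_le {c : ℕ → ℝ} (hc : Summable fun k => |c k|) (n : ℕ) (i : Fin n) :
    ∑ j, |OmegaMat c n i j| ≤ ∑' k, |c k| := by
  simpa only [OmegaMat_apply] using sum_abs_comp_le_tsum hc (omegaIndex_injective_row n i)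

lemma sum_abs_OmegaMat_col_le {c : ℕ → ℝ} (hc : Summable fun k => |c k|) (n : ℕ) (j : Fin (n + 1)) :
    ∑ i, |OmegaMat c n i j| ≤ ∑' k, |c k| := by
  simpa only [OmegaMat_apply] using sum_abs_comp_le_tsum hc (omegaIndex_injective_col n j)

lemma zIndex_injective (P n : ℕ) :
    Function.Injective fun x : Fin (P + 1) × Fin n => (x.1 : ℤ) * n + (x.2 : ℤ) + 1 - (n : ℤ) := by
  intro x y h
  apply finProdFinEquiv.injective
  have h' : ((x.1 : ℕ) : ℤ) * n + (x.2 : ℕ) = ((y.1 : ℕ) : ℤ) * n + (y.2 : ℕ) := by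
    simpa using h
  ext
  simp only [finProdFinEquiv, Equiv.coe_fn_mk]
  zify
  linarith

theorem moments_of_trace_hat_general
    {ΩS : Type*} [MeasureSpace ΩS] [IsProbabilityMeasure (ℙ : Measure ΩS)]
    (Z : ℤ → ΩS → ℝ) (hZmeas : ∀ t, Measurable (Z t))
    (hZindep : iIndepFun Z ℙ)
    -- condition (Z1)
    (hZmean : ∀ t, ∫ ω, Z t ω = 0) (hZvar : ∀ t, ∫ ω, (Z t ω) ^ 2 = 1)
    (σ4 : ℝ) (hZ4int : ∀ t, Integrable (fun ω => (Z t ω) ^ 4))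
    (hσ4 : ∀ t, ∫ ω, (Z t ω) ^ 4 ≤ σ4)
    -- coefficient decay
    (c : ℕ → ℝ) (C δ : ℝ) (hδ : 0 < δ)
    (hc : ∀ j : ℕ, |c j| ≤ C * ((j : ℝ) + 1) ^ (-(1 + δ)))
    -- aspect ratio
    (p : ℕ → ℕ) (y : ℝ) (hy : 0 < y)
    (hpn : Tendsto (fun n => (p n : ℝ) / (n : ℝ)) atTop (𝓝 y))
    -- the matrix 𝐙
    (Zm : (n : ℕ) → ΩS → Matrix (Fin (p n + 1)) (Fin n) ℝ)
    (hZm : ∀ n ω i t, Zm n ω i t = Z ((i : ℤ) * n + (t : ℤ) + 1 - (n : ℤ)) ω) :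
    (∃ K : ℝ, ∀ n : ℕ,
      |∫ ω, ((p n : ℝ) ^ 2)⁻¹ *
          Matrix.trace ((Zm n ω * OmegaMat c n) * (Zm n ω * OmegaMat c n)ᵀ)| ≤ K) ∧
    (∃ K : ℝ, ∀ n : ℕ,
      variance (fun ω => ((p n : ℝ) ^ 2)⁻¹ *
          Matrix.trace ((Zm n ω * OmegaMat c n) * (Zm n ω * OmegaMat c n)ᵀ)) ℙ
        ≤ K / (n : ℝ) ^ 2) := by
  obtain ⟨U, hU⟩ := exists_forall_natCast_div_le hy.ne' hpn
  have hcs := summable_abs_of_abs_le_rpow hδ hc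
  have hσ4₀ : 0 ≤ σ4 := (integral_nonneg fun ω => by positivity).trans (hσ4 0)
  refine ⟨⟨2 * U * (∑' k, |c k|) ^ 2, fun n => ?_⟩,
    ⟨2 * ((σ4 + 2) * (∑' k, |c k|) ^ 4) * U ^ 3, fun n => ?_⟩⟩
  · grw [abs_integral_inv_sq_mul_trace_le hZmeas hZ4int hZindep hZmean hZvar
      (zIndex_injective (p n) n) (hZm n) (sum_abs_OmegaMat_row_le hcs n), hU n]
  · grw [variance_inv_sq_mul_trace_le hZmeas hZ4int hZindep hZmean hZvar
      (zIndex_injective (p n) n) (hZm n) (sum_abs_OmegaMat_row_le hcs n)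
      (sum_abs_OmegaMat_col_le hcs n) hσ4₀ hσ4, hU n]

/-- **Moments of `Σ_𝐗̂ = p⁻² tr(𝐗̂𝐗̂ᵀ)`**, where `𝐗̂ = 𝐙Ω`. Under (Z1) and polynomial
decay of the coefficients, in the regime `p/n → y ∈ (0,∞)`: `E Σ_𝐗̂` is bounded uniformly
in `n`, and `Var Σ_𝐗̂ = O(n⁻²)`. -/
theorem moments_of_trace_hat
    {ΩS : Type*} [MeasureSpace ΩS] [IsProbabilityMeasure (ℙ : Measure ΩS)]
    (Z : ℤ → ΩS → ℝ) (hZmeas : ∀ t, Measurable (Z t))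
    (hZindep : iIndepFun Z ℙ)
    -- condition (Z1)
    (hZmean : ∀ t, ∫ ω, Z t ω = 0) (hZvar : ∀ t, ∫ ω, (Z t ω) ^ 2 = 1)
    (σ4 : ℝ) (hZ4int : ∀ t, Integrable (fun ω => (Z t ω) ^ 4))
    (hσ4 : ∀ t, ∫ ω, (Z t ω) ^ 4 ≤ σ4)
    -- coefficient decay
    (c : ℕ → ℝ) (C δ : ℝ) (hC : 0 < C) (hδ : 0 < δ)
    (hc : ∀ j : ℕ, |c j| ≤ C * ((j : ℝ) + 1) ^ (-(1 + δ)))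
    -- aspect ratio
    (p : ℕ → ℕ) (y : ℝ) (hy : 0 < y)
    (hpn : Tendsto (fun n => (p n : ℝ) / (n : ℝ)) atTop (𝓝 y))
    -- the matrix 𝐙
    (Zm : (n : ℕ) → ΩS → Matrix (Fin (p n + 1)) (Fin n) ℝ)
    (hZm : ∀ n ω i t, Zm n ω i t = Z ((i : ℤ) * n + (t : ℤ) + 1 - (n : ℤ)) ω) :
    (∃ K : ℝ, ∀ n : ℕ,
      |∫ ω, ((p n : ℝ) ^ 2)⁻¹ *
          Matrix.trace ((Zm n ω * OmegaMat c n) * (Zm n ω * OmegaMat c n)ᵀ)| ≤ K) ∧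
    (∃ K : ℝ, ∀ n : ℕ,
      variance (fun ω => ((p n : ℝ) ^ 2)⁻¹ *
          Matrix.trace ((Zm n ω * OmegaMat c n) * (Zm n ω * OmegaMat c n)ᵀ)) ℙ
        ≤ K / (n : ℝ) ^ 2) :=
  moments_of_trace_hat_general Z hZmeas hZindep hZmean hZvar σ4 hZ4int hσ4 c C δ hδ hc p y hy hpn Zm
    hZm
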